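/- For all 0 ≤ t < T, p ≤ P̄, and 0 < m₁ ≤ m₂ one has ū_BS(t, m₁, p) ≤ ū_BS(t, m₂, p). In other words, the Black–Scholes barrier-induced trading rate is nondecreasing in the uncapped asset price m. -/

import Mathlib

/-!
Put the factor `m` under the integral: it suffices that, for each `u = s - t > 0`,
`m ↦ m · [(σ/√u) φ(f) + (σ²/2) Φ(f)]` is nondecreasing, since the weight `G(T-s)/G(T-t)` is
nonnegative. The `Φ` part is a product of nonnegative nondecreasing factors, because `f` increases
with `m`. For the `φ` part write `a = σ√u` and `x = log((P̄-p)/m + 1) ≥ 0`; completing the square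
gives the Black–Scholes identity `φ(a/2 - x/a) = eˣ φ(a/2 + x/a)`, hence
`m φ(f) = (P̄ - p + m) φ(a/2 + x/a)`, and `a/2 + x/a ≥ 0` decreases as `m` grows.
-/

open MeasureTheory intervalIntegral

noncomputable section

/-- `G(t) = β cosh(β t) + λ⁻¹ Γ sinh(β t)` with `β = √(γ/λ)`. -/
def Gfun (lam gam Gam : ℝ) (t : ℝ) : ℝ :=
  Real.sqrt (gam / lam) * Real.cosh (Real.sqrt (gam / lam) * t)
    + lam⁻¹ * Gam * Real.sinh (Real.sqrt (gam / lam) * t)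

/-- The standard normal density `φ(x) = exp(−x²/2)/√(2π)`. -/
def stdNormalPdf (x : ℝ) : ℝ := Real.exp (-x ^ 2 / 2) / Real.sqrt (2 * Real.pi)

/-- The standard normal cumulative distribution function `Φ(x) = ∫_{−∞}^x φ(y) dy`. -/
def stdNormalCdf (x : ℝ) : ℝ := ∫ y in Set.Iic x, stdNormalPdf y

/-- `f(u, m, p) = σ√u/2 − (1/(σ√u)) log((P̄−p)/m + 1)`. -/
def fBS (σ Pbar : ℝ) (u m p : ℝ) : ℝ :=
  σ * Real.sqrt u / 2 - (1 / (σ * Real.sqrt u)) * Real.log ((Pbar - p) / m + 1)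

/-- The Black–Scholes barrier-induced trading rate
`ū_BS(t,m,p) = (m/(2λ)) ∫_t^T (G(T−s)/G(T−t)) [(σ/√(s−t)) φ(f(s−t,m,p)) + (σ²/2) Φ(f(s−t,m,p))] ds`. -/
def uBS (T lam gam Gam σ Pbar : ℝ) (t m p : ℝ) : ℝ :=
  (m / (2 * lam)) * ∫ s in t..T,
    (Gfun lam gam Gam (T - s) / Gfun lam gam Gam (T - t))
      * ((σ / Real.sqrt (s - t)) * stdNormalPdf (fBS σ Pbar (s - t) m p)
          + (σ ^ 2 / 2) * stdNormalCdf (fBS σ Pbar (s - t) m p))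

open Real Set

-- For `u < 0` both sides are junk zeros: `√u = 0`, and `u ^ (-1/2)` carries a factor `cos (π / 2)`.
lemma inv_sqrt_eq_rpow_neg_half (u : ℝ) : (√u)⁻¹ = u ^ (-(1 / 2) : ℝ) := by
  rcases le_or_gt 0 u with hu | hu
  · rw [sqrt_eq_rpow, rpow_neg hu]
  · rw [sqrt_eq_zero'.2 hu.le, inv_zero, rpow_def_of_neg hu]
    have : -(1 / 2 : ℝ) * π = -(π / 2) := by ring
    rw [this, cos_neg, cos_pi_div_two, mul_zero]

lemma intervalIntegrable_inv_sqrt (a b : ℝ) :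
    IntervalIntegrable (fun u => (√u)⁻¹) volume a b := by
  simpa only [inv_sqrt_eq_rpow_neg_half] using
    intervalIntegrable_rpow' (a := a) (b := b) (r := -(1 / 2)) (by norm_num)

lemma stdNormalPdf_eq_gaussianPDFReal : stdNormalPdf = ProbabilityTheory.gaussianPDFReal 0 1 := by
  ext x
  simp [stdNormalPdf, ProbabilityTheory.gaussianPDFReal, div_eq_inv_mul]

lemma stdNormalPdf_nonneg (x : ℝ) : 0 ≤ stdNormalPdf x := by
  unfold stdNormalPdf; positivity

lemma stdNormalPdf_le_of_abs_le {x y : ℝ} (h : |x| ≤ |y|) : stdNormalPdf y ≤ stdNormalPdf x := by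
  unfold stdNormalPdf
  have : x ^ 2 ≤ y ^ 2 := sq_le_sq.2 h
  gcongr ?_ / _
  exact exp_le_exp.2 (by linarith)

lemma stdNormalPdf_antitoneOn : AntitoneOn stdNormalPdf (Ici 0) := fun x hx y hy h =>
  stdNormalPdf_le_of_abs_le <| by rwa [abs_of_nonneg hx, abs_of_nonneg hy]

lemma stdNormalPdf_sub_div {a : ℝ} (ha : a ≠ 0) (x : ℝ) :
    stdNormalPdf (a / 2 - x / a) = exp x * stdNormalPdf (a / 2 + x / a) := by
  unfold stdNormalPdf
  rw [mul_div_assoc', ← exp_add]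
  congr 2
  field_simp
  ring

lemma continuous_stdNormalPdf : Continuous stdNormalPdf := by
  unfold stdNormalPdf; fun_prop

lemma stdNormalCdf_nonneg (x : ℝ) : 0 ≤ stdNormalCdf x :=
  setIntegral_nonneg measurableSet_Iic fun y _ => stdNormalPdf_nonneg y

lemma integrable_stdNormalPdf : Integrable stdNormalPdf := by
  rw [stdNormalPdf_eq_gaussianPDFReal]
  exact ProbabilityTheory.integrable_gaussianPDFReal 0 1

lemma stdNormalCdf_le_one (x : ℝ) : stdNormalCdf x ≤ 1 := by
  calc stdNormalCdf x ≤ ∫ y, stdNormalPdf y :=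
        setIntegral_le_integral integrable_stdNormalPdf (.of_forall stdNormalPdf_nonneg)
    _ = 1 := by
        rw [stdNormalPdf_eq_gaussianPDFReal]
        exact ProbabilityTheory.integral_gaussianPDFReal_eq_one 0 one_ne_zero

lemma stdNormalCdf_mono : Monotone stdNormalCdf := fun _ _ h =>
  setIntegral_mono_set integrable_stdNormalPdf.integrableOn (.of_forall stdNormalPdf_nonneg)
    (Iic_subset_Iic.2 h).eventuallyLE

lemma Gfun_nonneg {lam gam Gam u : ℝ} (hlam : 0 ≤ lam) (hGam : 0 ≤ Gam) (hu : 0 ≤ u) :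
    0 ≤ Gfun lam gam Gam u := by
  have : 0 ≤ sinh (√(gam / lam) * u) := sinh_nonneg_iff.2 (by positivity)
  unfold Gfun
  positivity

lemma antitoneOn_log_div_add_one {K : ℝ} (hK : 0 ≤ K) :
    AntitoneOn (fun m => log (K / m + 1)) (Ioi 0) := fun m (hm : 0 < m) n (hn : 0 < n) h =>
  log_le_log (by positivity) (by gcongr)

lemma fBS_monotoneOn {σ Pbar p u : ℝ} (hσ : 0 ≤ σ) (hp : p ≤ Pbar) :
    MonotoneOn (fun m => fBS σ Pbar u m p) (Ioi 0) := fun m hm n hn h => by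
  have := antitoneOn_log_div_add_one (sub_nonneg.2 hp) hm hn h
  unfold fBS
  exact sub_le_sub_left (mul_le_mul_of_nonneg_left this (by positivity)) _

def uBSKernel (σ Pbar u m p : ℝ) : ℝ :=
  (σ / √u) * stdNormalPdf (fBS σ Pbar u m p) + (σ ^ 2 / 2) * stdNormalCdf (fBS σ Pbar u m p)

lemma mul_stdNormalPdf_fBS {σ Pbar p u m : ℝ} (hσ : σ ≠ 0) (hu : 0 < u) (hp : p ≤ Pbar)
    (hm : 0 < m) :
    m * stdNormalPdf (fBS σ Pbar u m p)
      = (Pbar - p + m) * stdNormalPdf (σ * √u / 2 + log ((Pbar - p) / m + 1) / (σ * √u)) := by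
  have ha : σ * √u ≠ 0 := mul_ne_zero hσ (sqrt_pos.2 hu).ne'
  have hK : 0 < (Pbar - p) / m + 1 := by have := sub_nonneg.2 hp; positivity
  have hf : fBS σ Pbar u m p = σ * √u / 2 - log ((Pbar - p) / m + 1) / (σ * √u) := by
    unfold fBS; ring
  rw [hf, stdNormalPdf_sub_div ha, exp_log hK, ← mul_assoc]
  congr 1
  field_simp

lemma monotoneOn_mul_stdNormalPdf_fBS {σ Pbar p u : ℝ} (hσ : 0 < σ) (hu : 0 < u)
    (hp : p ≤ Pbar) :
    MonotoneOn (fun m => m * stdNormalPdf (fBS σ Pbar u m p)) (Ioi 0) := by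
  have hK : 0 ≤ Pbar - p := sub_nonneg.2 hp
  have hlog_nonneg (m : ℝ) (hm : m ∈ Ioi 0) : 0 ≤ log ((Pbar - p) / m + 1) :=
    log_nonneg (le_add_of_nonneg_left (div_nonneg hK (le_of_lt hm)))
  refine MonotoneOn.congr ?_ fun m hm => (mul_stdNormalPdf_fBS hσ.ne' hu hp hm).symm
  refine MonotoneOn.mul (fun m _ n _ h => by linarith) (fun m hm n hn h => ?_)
    (fun m (hm : 0 < m) => by linarith) fun _ _ => stdNormalPdf_nonneg _
  have hlog := antitoneOn_log_div_add_one hK hm hn h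
  refine stdNormalPdf_antitoneOn ?_ ?_ ?_
  · have := hlog_nonneg n hn; exact mem_Ici.2 (by positivity)
  · have := hlog_nonneg m hm; exact mem_Ici.2 (by positivity)
  · gcongr

lemma monotoneOn_mul_uBSKernel {σ Pbar p u : ℝ} (hσ : 0 < σ) (hu : 0 < u) (hp : p ≤ Pbar) :
    MonotoneOn (fun m => m * uBSKernel σ Pbar u m p) (Ioi 0) := fun m hm n hn h => by
  have hpdf := monotoneOn_mul_stdNormalPdf_fBS hσ hu hp hm hn h
  have hcdf : m * stdNormalCdf (fBS σ Pbar u m p) ≤ n * stdNormalCdf (fBS σ Pbar u n p) :=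
    mul_le_mul h (stdNormalCdf_mono (fBS_monotoneOn hσ.le hp hm hn h)) (stdNormalCdf_nonneg _)
      (le_of_lt hn)
  simp only [uBSKernel, mul_add, mul_left_comm _ (σ / √u), mul_left_comm _ (σ ^ 2 / 2)]
  gcongr

lemma intervalIntegrable_uBSKernel (σ Pbar m p a b : ℝ) :
    IntervalIntegrable (fun u => uBSKernel σ Pbar u m p) volume a b := by
  have hf : Measurable fun u => fBS σ Pbar u m p := by unfold fBS; fun_prop
  refine IntervalIntegrable.add ?_ ?_
  · have h := (intervalIntegrable_inv_sqrt a b).const_mul σ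
    rw [intervalIntegrable_iff] at h ⊢
    simp only [div_eq_mul_inv]
    refine h.mul_bdd (continuous_stdNormalPdf.measurable.comp hf).aestronglyMeasurable
      (c := stdNormalPdf 0) (.of_forall fun u => ?_)
    rw [norm_of_nonneg (stdNormalPdf_nonneg _)]
    exact stdNormalPdf_le_of_abs_le (by simp)
  · have h := (intervalIntegrable_const (c := σ ^ 2 / 2) (μ := volume) (a := a) (b := b))
    rw [intervalIntegrable_iff] at h ⊢
    refine h.mul_bdd (stdNormalCdf_mono.measurable.comp hf).aestronglyMeasurable
      (c := 1) (.of_forall fun u => ?_)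
    rw [norm_of_nonneg (stdNormalCdf_nonneg _)]
    exact stdNormalCdf_le_one _

lemma uBS_eq_integral (T lam gam Gam σ Pbar t m p : ℝ) :
    uBS T lam gam Gam σ Pbar t m p = (2 * lam)⁻¹ * ∫ s in t..T,
      Gfun lam gam Gam (T - s) / Gfun lam gam Gam (T - t) * (m * uBSKernel σ Pbar (s - t) m p) := by
  unfold uBS uBSKernel
  rw [← intervalIntegral.integral_const_mul, ← intervalIntegral.integral_const_mul]
  congr 1
  ext s
  ring

theorem uBS_monotone_in_uncapped_price_general
    (T lam gam Gam σ Pbar : ℝ) (hlam : 0 < lam) (hGam : 0 < Gam)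
    (hσ : 0 < σ) :
    ∀ t, 0 ≤ t → t < T → ∀ p, p ≤ Pbar → ∀ m₁ m₂, 0 < m₁ → m₁ ≤ m₂ →
      uBS T lam gam Gam σ Pbar t m₁ p ≤ uBS T lam gam Gam σ Pbar t m₂ p := by
  intro t _ htT p hp m₁ m₂ hm₁ h12
  have hG {u : ℝ} (hu : 0 ≤ u) : 0 ≤ Gfun lam gam Gam u := Gfun_nonneg hlam.le hGam.le hu
  have hratio : Continuous fun s => Gfun lam gam Gam (T - s) / Gfun lam gam Gam (T - t) := by
    unfold Gfun; fun_prop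
  have hint (m : ℝ) : IntervalIntegrable (fun s => Gfun lam gam Gam (T - s) /
      Gfun lam gam Gam (T - t) * (m * uBSKernel σ Pbar (s - t) m p)) volume t T := by
    have h := (intervalIntegrable_uBSKernel σ Pbar m p 0 (T - t)).comp_sub_right t
    rw [zero_add, sub_add_cancel] at h
    exact (h.const_mul m).continuousOn_mul hratio.continuousOn
  rw [uBS_eq_integral, uBS_eq_integral]
  refine mul_le_mul_of_nonneg_left (intervalIntegral.integral_mono_on_of_le_Ioo htT.le
    (hint m₁) (hint m₂) fun s hs => ?_) (by positivity)
  exact mul_le_mul_of_nonneg_left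
    (monotoneOn_mul_uBSKernel hσ (sub_pos.2 hs.1) hp hm₁ (hm₁.trans_le h12) h12)
    (div_nonneg (hG (by linarith [hs.2])) (hG (by linarith)))

/-- for `0 ≤ t < T`, `p ≤ P̄` and `0 < m₁ ≤ m₂`,
`ū_BS(t, m₁, p) ≤ ū_BS(t, m₂, p)`: the Black–Scholes barrier-induced rate is
nondecreasing in the uncapped asset price `m`. -/
theorem uBS_monotone_in_uncapped_price
    (T lam gam Gam σ Pbar : ℝ) (hlam : 0 < lam) (hgam : 0 < gam) (hGam : 0 < Gam)
    (hσ : 0 < σ) :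
    ∀ t, 0 ≤ t → t < T → ∀ p, p ≤ Pbar → ∀ m₁ m₂, 0 < m₁ → m₁ ≤ m₂ →
      uBS T lam gam Gam σ Pbar t m₁ p ≤ uBS T lam gam Gam σ Pbar t m₂ p :=
  uBS_monotone_in_uncapped_price_general T lam gam Gam σ Pbar hlam hGam hσ

end
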